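/- Every 101-avoiding ascent sequence is self-modified. That is, if a = (a_1,...,a_n) is an ascent sequence containing no indices i < j < k with a_i = a_k > a_j, then a_m ∈ [0, a_{m-1}] ∪ {1 + asc(a_1,...,a_{m-1})} for every m > 1. -/
import Mathlib


def ascents (l : List ℕ) : ℕ :=
  ((l.zip l.tail).filter (fun p => p.1 < p.2)).length

def IsAscSeq (l : List ℕ) : Prop :=
  l.getD 0 0 = 0 ∧
  ∀ k, k < l.length → 0 < k → l.getD k 0 ≤ ascents (l.take k) + 1

def IsRGF (l : List ℕ) : Prop :=
  l.getD 0 0 = 0 ∧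
  ∀ k, k < l.length → ∀ j, l.getD k 0 = j + 1 → ∃ i, i < k ∧ l.getD i 0 = j

def SelfModified (l : List ℕ) : Prop :=
  IsAscSeq l ∧
  ∀ k, k < l.length → 0 < k →
    l.getD k 0 ≤ l.getD (k - 1) 0 ∨ l.getD k 0 = ascents (l.take k) + 1

def Contains101 (l : List ℕ) : Prop :=
  ∃ i j k, i < j ∧ j < k ∧ k < l.length ∧
    l.getD i 0 = l.getD k 0 ∧ l.getD j 0 < l.getD k 0

def Contains0101 (l : List ℕ) : Prop :=
  ∃ i j k m, i < j ∧ j < k ∧ k < m ∧ m < l.length ∧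
    l.getD i 0 = l.getD k 0 ∧ l.getD j 0 = l.getD m 0 ∧ l.getD i 0 < l.getD j 0

def Contains1010 (l : List ℕ) : Prop :=
  ∃ i j k m, i < j ∧ j < k ∧ k < m ∧ m < l.length ∧
    l.getD i 0 = l.getD k 0 ∧ l.getD j 0 = l.getD m 0 ∧ l.getD j 0 < l.getD i 0

/-- The view of position `i` in the sequence `a`: the number of indices `j > i` such
that `a j` strictly exceeds all entries `a k` for `i ≤ k < j`.  This agrees with the
recursive definition `v i = v j + 1` for `j` the least index `> i` with `a j > a i`. -/
def view {α : Type*} [LinearOrder α] [Inhabited α] (a : List α) (i : ℕ) : ℕ :=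
  ((List.range a.length).filter (fun j =>
    decide (i < j ∧ ∀ k, k < j → i ≤ k → a.getD k default < a.getD j default))).length

/-- The panorama of `a`: the views of the positions of `a`, listed grouped by entry
value from largest value to smallest, positions within a group in increasing order. -/
def pan {α : Type*} [LinearOrder α] [Inhabited α] (a : List α) : List ℕ :=
  ((List.range a.length).mergeSort (fun i j =>
    decide (a.getD j default < a.getD i default ∨
      (a.getD i default = a.getD j default ∧ i ≤ j)))).map (view a)

/-- A square matrix of natural numbers, given by a dimension and an entry function
(indices are 0-based; entries with an index `≥ d` are irrelevant/zero). -/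
structure FMat where
  d : ℕ
  entry : ℕ → ℕ → ℕ

/-- 0-based index of the first row whose rightmost entry is nonzero. -/
noncomputable def mindex (M : FMat) : ℕ :=
  sInf {i | M.entry i (M.d - 1) ≠ 0}

/-- One step of the recursive bijection from ascent sequences to Fishburn matrices,
with cases AM1, AM2, AM3 (0-based indices). -/
noncomputable def fStep (M : FMat) (a : ℕ) : FMat :=
  if a ≤ mindex M then
    -- AM1: increase entry (a, d-1)
    ⟨M.d, fun i j => M.entry i j + if i = a ∧ j = M.d - 1 then 1 else 0⟩
  else if a = M.d then
    -- AM2: append a new row and column, with 1 in the new diagonal entry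
    ⟨M.d + 1, fun i j =>
      if i = M.d ∨ j = M.d then (if i = M.d ∧ j = M.d then 1 else 0)
      else M.entry i j⟩
  else
    -- AM3: insert a new row and column at index a
    ⟨M.d + 1, fun i j =>
      if i = a then (if j = M.d then 1 else 0)
      else if j = a then (if i < a then M.entry i (M.d - 1) else 0)
      else if j = M.d ∧ i < a then 0
      else M.entry (if i < a then i else i - 1) (if j < a then j else j - 1)⟩

/-- The map from ascent sequences to Fishburn matrices. -/
noncomputable def fAM (l : List ℕ) : FMat :=
  l.tail.foldl fStep ⟨1, fun i j => if i = 0 ∧ j = 0 then 1 else 0⟩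

/-- Fishburn matrix: upper triangular (and supported on `[0,d) × [0,d)`),
with no zero row and no zero column. -/
def IsFishburn (M : FMat) : Prop :=
  (∀ i j, (M.d ≤ i ∨ M.d ≤ j ∨ j < i) → M.entry i j = 0) ∧
  (∀ i, i < M.d → ∃ j, j < M.d ∧ M.entry i j ≠ 0) ∧
  (∀ j, j < M.d → ∃ i, i < M.d ∧ M.entry i j ≠ 0)

def entrySum (M : FMat) : ℕ :=
  ∑ i ∈ Finset.range M.d, ∑ j ∈ Finset.range M.d, M.entry i j

/-- Reflection of a matrix through its antidiagonal. -/
def reflect (M : FMat) : FMat :=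
  ⟨M.d, fun i j => if i < M.d ∧ j < M.d then M.entry (M.d - 1 - j) (M.d - 1 - i) else 0⟩

/-- The canonical sequence `(0^{m₀₀}, 1^{m₁₁}, 0^{m₀₁}, 2^{m₂₂}, 1^{m₁₂}, 0^{m₀₂}, …)`
(0-based indices) associated to a matrix; this is `f_MA(M)` for `M ∈ RMatrices`. -/
def canonSeq (M : FMat) : List ℕ :=
  (List.range M.d).flatMap (fun j =>
    (List.range (j + 1)).reverse.flatMap (fun i => List.replicate (M.entry i j) i))

/-- The dual canonical sequence
`(0^{m_{d-1,d-1}}, 1^{m_{d-2,d-2}}, 0^{m_{d-2,d-1}}, …, (d-1)^{m_{0,0}}, …, 0^{m_{0,d-1}})`,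
i.e. `f_MA` applied to the antidiagonal reflection of `M`. -/
def dualCanonSeq (M : FMat) : List ℕ :=
  (List.range M.d).flatMap (fun j =>
    (List.range (j + 1)).reverse.flatMap (fun i =>
      List.replicate (M.entry (M.d - 1 - j) (M.d - 1 - i)) i))

/-- A matrix is SE-free if it has no pair of nonzero entries `m i j`, `m i' j'`
with `i < i'`, `j < j'` and `i' ≤ j`. -/
def SEFree (M : FMat) : Prop :=
  ¬ ∃ i j i' j', i < i' ∧ j < j' ∧ i' ≤ j ∧ j' < M.d ∧
    M.entry i j ≠ 0 ∧ M.entry i' j' ≠ 0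

/-- Generalized ballot sequence (Yamanouchi word): in every prefix, each value `j+1`
occurs at most as often as `j`. -/
def IsBallot (l : List ℕ) : Prop :=
  ∀ k j, (l.take k).count (j + 1) ≤ (l.take k).count j

lemma ascents_cons_cons (a b : ℕ) (s : List ℕ) :
    ascents (a :: b :: s) = (if a < b then 1 else 0) + ascents (b :: s) := by
  by_cases hab : a < b <;>
    simp [ascents, List.zip, List.filter_cons, hab, Nat.add_comm]

lemma ascents_singleton (a : ℕ) : ascents [a] = 0 := by simp [ascents]

lemma ascents_concat2 : ∀ (xs : List ℕ) (x y : ℕ),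
    ascents (xs ++ [x, y]) = ascents (xs ++ [x]) + (if x < y then 1 else 0) := by
  intro xs
  induction xs with
  | nil =>
    intro x y
    simp [ascents_cons_cons, ascents_singleton]
  | cons a t ih =>
    intro x y
    cases t with
    | nil =>
      simp only [List.nil_append, List.cons_append, ascents_cons_cons,
        ascents_singleton]
      omega
    | cons b t' =>
      have hthis := ih x y
      simp only [List.cons_append] at hthis ⊢
      rw [ascents_cons_cons, ascents_cons_cons a b, hthis]
      omega

lemma ascents_take_succ (l : List ℕ) (k : ℕ) (hk : 1 ≤ k) (hlt : k < l.length) :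
    ascents (l.take (k + 1)) =
      ascents (l.take k) + (if l.getD (k - 1) 0 < l.getD k 0 then 1 else 0) := by
  obtain ⟨j, rfl⟩ : ∃ j, k = j + 1 := ⟨k - 1, by omega⟩
  have hj : j < l.length := by omega
  have h1 : l.take (j + 1) = l.take j ++ [l.getD j 0] := by
    rw [List.take_succ, List.getElem?_eq_getElem hj]
    simp [List.getD_eq_getElem?_getD, List.getElem?_eq_getElem hj]
  have h2 : l.take (j + 2) = l.take j ++ [l.getD j 0, l.getD (j + 1) 0] := by
    rw [show j + 2 = (j + 1) + 1 from rfl, List.take_succ,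
      List.getElem?_eq_getElem hlt, h1]
    simp [List.getD_eq_getElem?_getD, List.getElem?_eq_getElem hlt]
  rw [h1, h2, ascents_concat2]
  simp

lemma getD_take (l : List ℕ) (i k : ℕ) (hik : i < k) :
    (l.take k).getD i 0 = l.getD i 0 := by
  simp [List.getD_eq_getElem?_getD, List.getElem?_take, hik]

lemma avoids101_allValues (l : List ℕ) (h : IsAscSeq l)
    (h101 : ¬ ∃ i j k, i < j ∧ j < k ∧ k < l.length ∧
      l.getD i 0 = l.getD k 0 ∧ l.getD j 0 < l.getD k 0) :
    ∀ k, 1 ≤ k → k ≤ l.length → ∀ v, v ≤ ascents (l.take k) → ∃ i, i < k ∧ l.getD i 0 = v := by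
  intro k
  induction k with
  | zero => omega
  | succ k ih =>
    intro _ hk v hv
    rcases Nat.eq_or_lt_of_le (show 1 ≤ k + 1 by omega) with h1 | h1
    · -- k + 1 = 1, i.e. k = 0
      have hk0 : k = 0 := by omega
      subst hk0
      have hl : 0 < l.length := by omega
      have : l.take 1 = [l.getD 0 0] := by
        rw [List.take_succ, List.getElem?_eq_getElem hl]
        simp [List.getD_eq_getElem?_getD, List.getElem?_eq_getElem hl]
      rw [this] at hv
      have : ascents [l.getD 0 0] = 0 := by simp [ascents]
      refine ⟨0, by omega, ?_⟩
      rw [h.1]; omega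
    · have hk1 : 1 ≤ k := by omega
      have hkl : k < l.length := by omega
      have hstep := ascents_take_succ l k hk1 hkl
      by_cases hasc : l.getD (k - 1) 0 < l.getD k 0
      · -- ascent at k; claim l.getD k 0 = ascents (l.take k) + 1
        have hb := h.2 k hkl (by omega)
        have heq : l.getD k 0 = ascents (l.take k) + 1 := by
          rcases Nat.eq_or_lt_of_le hb with he | hl2
          · exact he
          · -- l.getD k 0 ≤ ascents (l.take k): earlier occurrence → 101 pattern
            have hle : l.getD k 0 ≤ ascents (l.take k) := by omega
            obtain ⟨i, hik, hiv⟩ := ih hk1 (by omega) (l.getD k 0) hle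
            have hine : i ≠ k - 1 := by
              intro hcontra; rw [hcontra] at hiv; omega
            exact absurd ⟨i, k - 1, k, by omega, by omega, hkl, by omega, hasc⟩ h101
        rw [hstep, if_pos hasc] at hv
        rcases Nat.lt_or_ge v (ascents (l.take k) + 1) with hv2 | hv2
        · obtain ⟨i, hik, hiv⟩ := ih hk1 (by omega) v (by omega)
          exact ⟨i, by omega, hiv⟩
        · exact ⟨k, by omega, by omega⟩
      · rw [hstep, if_neg hasc] at hv
        obtain ⟨i, hik, hiv⟩ := ih hk1 (by omega) v (by omega)
        exact ⟨i, by omega, hiv⟩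

theorem avoids101_selfModified (l : List ℕ) (h : IsAscSeq l)
    (h101 : ¬ ∃ i j k, i < j ∧ j < k ∧ k < l.length ∧
      l.getD i 0 = l.getD k 0 ∧ l.getD j 0 < l.getD k 0) :
    ∀ m, m < l.length → 0 < m →
      l.getD m 0 ≤ l.getD (m - 1) 0 ∨ l.getD m 0 = ascents (l.take m) + 1 := by
  intro m hm hm0
  by_cases hle : l.getD m 0 ≤ l.getD (m - 1) 0
  · exact Or.inl hle
  · right
    have hasc : l.getD (m - 1) 0 < l.getD m 0 := by omega
    have hb := h.2 m hm hm0
    rcases Nat.eq_or_lt_of_le hb with he | hl2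
    · exact he
    · have hle2 : l.getD m 0 ≤ ascents (l.take m) := by omega
      obtain ⟨i, him, hiv⟩ := avoids101_allValues l h h101 m hm0 (by omega) (l.getD m 0) hle2
      have hine : i ≠ m - 1 := by intro hc; rw [hc] at hiv; omega
      exact absurd ⟨i, m - 1, m, by omega, by omega, hm, by omega, hasc⟩ h101
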